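/- arXiv:2501.13872 — 2 statements merged into one kernel-verified Lean document; each statement's English description precedes it below -/
import Mathlib

section
/- Let $q \ge 2$ be a real number. Then for all $s \ge 0$, $(e^s - 1)\, s \ge \frac{s^q}{\Gamma(q)}$, where $\Gamma$ denotes the Gamma function. -/
/-!
Write `m + 1 ≤ q ≤ m + 2` with `m ≥ 1`. Log-convexity of `Γ` gives Wendel's bound
`Γ(m + 2) ≤ q ^ (m + 2 - q) Γ(q)`, and weighted AM-GM splits `s ^ q q ^ (m + 2 - q)` into the
neighbouring integer powers, so that `s ^ q / Γ(q) ≤ s ^ (m + 1) / m! + s ^ (m + 2) / (m + 1)!`.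
These are two of the terms of `(e ^ s - 1) s = ∑_{k ≥ 1} s ^ (k + 1) / k!`.
-/

open Real Finset Nat

theorem Real.Gamma_add_le_rpow_mul_Gamma {y u : ℝ} (hy : 0 < y) (hu₀ : 0 ≤ u) (hu₁ : u ≤ 1) :
    Gamma (y + u) ≤ y ^ u * Gamma y := by
  have hΓ : 0 < Gamma y := Gamma_pos_of_pos hy
  have hconv := convexOn_log_Gamma.2 (Set.mem_Ioi.2 hy) (Set.mem_Ioi.2 (by linarith : 0 < y + 1))
    (by linarith : 0 ≤ 1 - u) hu₀ (by ring)
  simp only [smul_eq_mul, Function.comp_apply, Gamma_add_one hy.ne',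
    log_mul hy.ne' hΓ.ne'] at hconv
  rw [show (1 - u) * y + u * (y + 1) = y + u by ring] at hconv
  rw [← log_le_log_iff (Gamma_pos_of_pos (by linarith)) (by positivity),
    log_mul (by positivity) hΓ.ne', log_rpow hy]
  linarith

theorem Real.rpow_mul_rpow_le_add_pow {m : ℕ} {q s : ℝ} (hq₁ : (m : ℝ) + 1 ≤ q)
    (hq₂ : q ≤ m + 2) (hs : 0 ≤ s) :
    s ^ q * q ^ ((m : ℝ) + 2 - q) ≤ (m + 1) * s ^ (m + 1) + s ^ (m + 2) := by
  have hq : 0 < q := by linarith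
  have hsplit : s ^ q * q ^ ((m : ℝ) + 2 - q)
      = (q * s ^ (m + 1)) ^ ((m : ℝ) + 2 - q) * (s ^ (m + 2)) ^ (q - (m + 1)) := by
    have hexponent : ((m + 1 : ℕ) : ℝ) * (m + 2 - q) + ((m + 2 : ℕ) : ℝ) * (q - (m + 1)) = q := by
      push_cast; ring
    rw [mul_rpow hq.le (by positivity), ← rpow_natCast, ← rpow_natCast, ← rpow_mul hs,
      ← rpow_mul hs, mul_assoc, ← rpow_add' hs (hexponent.symm ▸ hq.ne'), hexponent, mul_comm]
  have hamgm := geom_mean_le_arith_mean2_weighted (p₁ := q * s ^ (m + 1)) (p₂ := s ^ (m + 2))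
    (by linarith) (by linarith) (by positivity) (by positivity)
    (by ring : (m : ℝ) + 2 - q + (q - (m + 1)) = 1)
  have hweight₁ : ((m : ℝ) + 2 - q) * q ≤ m + 1 := by
    nlinarith [mul_nonneg (by linarith : 0 ≤ q - 1) (by linarith : 0 ≤ q - (m + 1))]
  have hweight₂ : q - (m + 1) ≤ 1 := by linarith
  rw [hsplit]
  refine hamgm.trans ?_
  rw [← mul_assoc]
  exact add_le_add (mul_le_mul_of_nonneg_right hweight₁ (by positivity))
    (mul_le_of_le_one_left (by positivity) hweight₂)

theorem Real.rpow_div_Gamma_le {m : ℕ} {q s : ℝ} (hq₁ : (m : ℝ) + 1 ≤ q) (hq₂ : q ≤ m + 2)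
    (hs : 0 ≤ s) :
    s ^ q / Gamma q ≤ s ^ (m + 1) / m ! + s ^ (m + 2) / (m + 1)! := by
  have hq : 0 < q := by linarith
  have hwendel : ((m + 1)! : ℝ) ≤ q ^ ((m : ℝ) + 2 - q) * Gamma q := by
    have h := Gamma_add_le_rpow_mul_Gamma hq (u := m + 2 - q) (by linarith) (by linarith)
    rw [add_sub_cancel, show (m : ℝ) + 2 = (m + 1 : ℕ) + 1 by push_cast; ring,
      Gamma_nat_eq_factorial] at h
    convert h using 4; push_cast; ring
  have hfactorial : ((m + 1)! : ℝ) = (m + 1) * m ! := by push_cast [factorial_succ]; ring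
  calc s ^ q / Gamma q = s ^ q * q ^ ((m : ℝ) + 2 - q) / (q ^ ((m : ℝ) + 2 - q) * Gamma q) := by
        field_simp
    _ ≤ ((m + 1) * s ^ (m + 1) + s ^ (m + 2)) / (m + 1)! := by
        gcongr
        exact rpow_mul_rpow_le_add_pow hq₁ hq₂ hs
    _ = s ^ (m + 1) / m ! + s ^ (m + 2) / (m + 1)! := by
        rw [add_div, hfactorial, mul_div_mul_left _ _ (by positivity)]

theorem Real.pow_div_factorial_add_le_exp_sub_one_mul {m : ℕ} (hm : 1 ≤ m) {s : ℝ}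
    (hs : 0 ≤ s) :
    s ^ (m + 1) / m ! + s ^ (m + 2) / (m + 1)! ≤ (exp s - 1) * s := by
  have htaylor : 1 + s ^ m / m ! + s ^ (m + 1) / (m + 1)! ≤ exp s := by
    refine le_trans ?_ (sum_le_exp_of_nonneg hs (m + 2))
    rw [sum_range_succ, sum_range_succ]
    gcongr
    simpa using single_le_sum (fun i _ => by positivity : ∀ i ∈ range m, 0 ≤ s ^ i / i !)
      (mem_range.2 hm)
  calc s ^ (m + 1) / m ! + s ^ (m + 2) / (m + 1)!
      = (s ^ m / m ! + s ^ (m + 1) / (m + 1)!) * s := by ring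
    _ ≤ (exp s - 1) * s := by gcongr; linarith

/-- For real `q ≥ 2` and `s ≥ 0`, `(e^s - 1) s ≥ s^q / Γ(q)`. -/
theorem exp_sub_one_mul_ge_rpow_div_gamma
    (q : ℝ) (hq : 2 ≤ q) (s : ℝ) (hs : 0 ≤ s) :
    s ^ q / Real.Gamma q ≤ (Real.exp s - 1) * s := by
  have hfloor : 2 ≤ ⌊q⌋₊ := le_floor (by exact_mod_cast hq)
  obtain ⟨m, hm⟩ : ∃ m : ℕ, ⌊q⌋₊ = m + 1 := ⟨⌊q⌋₊ - 1, by omega⟩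
  have hq₁ : (m : ℝ) + 1 ≤ q := by exact_mod_cast hm ▸ floor_le (by linarith : 0 ≤ q)
  have hq₂ : q ≤ m + 2 := by
    have := lt_floor_add_one q
    rw [hm] at this
    push_cast at this
    linarith
  exact (rpow_div_Gamma_le hq₁ hq₂ hs).trans
    (pow_div_factorial_add_le_exp_sub_one_mul (by omega) hs)
end

section
/- Let $d \ge 1$, $q > 1$, and let $f : \mathbb{T}^d \times \mathbb{R}^d \to [0,\infty)$ be measurable with $f \in L^q(\mathbb{T}^d \times \mathbb{R}^d)$ and $\iint |v|^2 f\,dx\,dv < \infty$. Set $\rho(x) := \int_{\mathbb{R}^d} f(x,v)\,dv$ and $p := \frac{d(q-1)+2q}{d(q-1)+2}$. Then there exists a constant $C = C(d,q)$ such that $\|\rho\|_{L^p(\mathbb{T}^d)} \le C\, \|f\|_{L^q(\mathbb{T}^d\times\mathbb{R}^d)}^{\frac{2/d}{1/q' + 2/d}} \left(\iint_{\mathbb{T}^d\times\mathbb{R}^d} |v|^2 f\,dx\,dv\right)^{\frac{1/q'}{1/q' + 2/d}}$, where $q' = q/(q-1)$. -/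
/-!
Fix `x` and split `ρ(x) = ∫ f(x,v) dv` at `|v| = R`. Hölder's inequality bounds the part over the
ball by `‖f(x,·)‖_q |B_R|^{1/q'} ∼ ‖f(x,·)‖_q R^{d/q'}`, and the second moment `m(x)` bounds the
tail by `R⁻² m(x)`. Optimizing over `R` gives `ρ(x) ≤ C ‖f(x,·)‖_q^θ m(x)^{1-θ}` with
`θ = 2/(d/q' + 2)`; raising this to the power `p` and applying Hölder's inequality in `x` with the
exponents `q/(θp)` and `1/((1-θ)p)`, which are conjugate exactly for the stated `p`, gives the
bound on `‖ρ‖_p`.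
-/

open MeasureTheory Metric
open scoped ENNReal

theorem ENNReal.le_two_mul_rpow_mul_rpow_of_forall_le {α β : ℝ} (hα : 0 < α) (hβ : 0 < β)
    {g a b : ℝ≥0∞} (ha : a = 0 → g = 0) (hb : b = 0 → g = 0)
    (h : ∀ r : ℝ≥0∞, r ≠ 0 → r ≠ ∞ → g ≤ a * r ^ α + b * r ^ (-β)) :
    g ≤ 2 * a ^ (β / (α + β)) * b ^ (α / (α + β)) := by
  have hαβ : 0 < α + β := by positivity
  -- `h` says nothing when `a = 0, b = ∞` or `a = ∞, b = 0`; `ha` and `hb` cover these cases.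
  rcases eq_or_ne a 0 with rfl | ha0
  · simp [ha rfl]
  rcases eq_or_ne b 0 with rfl | hb0
  · simp [hb rfl]
  rcases eq_or_ne a ∞ with rfl | hat
  · rw [ENNReal.top_rpow_of_pos (div_pos hβ hαβ), ENNReal.mul_top two_ne_zero,
      ENNReal.top_mul (ENNReal.rpow_pos_of_nonneg hb0.bot_lt (div_pos hα hαβ).le).ne']
    exact le_top
  rcases eq_or_ne b ∞ with rfl | hbt
  · rw [ENNReal.top_rpow_of_pos (div_pos hα hαβ), ENNReal.mul_top (mul_ne_zero two_ne_zero
      (ENNReal.rpow_pos_of_nonneg ha0.bot_lt (div_pos hβ hαβ).le).ne')]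
    exact le_top
  set s := α / (α + β)
  set t := β / (α + β)
  have hs : 1 - s = t := by simp only [s, t]; field_simp; ring
  have ht : 1 - t = s := by linarith
  have mul_rpow_neg : ∀ x : ℝ≥0∞, x ≠ 0 → x ≠ ∞ → ∀ u : ℝ, x * x ^ (-u) = x ^ (1 - u) :=
    fun x hx hxt u => by rw [sub_eq_add_neg, ENNReal.rpow_add _ _ hx hxt, ENNReal.rpow_one]
  -- the two terms balance at `r ^ (α + β) = b / a`
  set r := (b * a⁻¹) ^ (α + β)⁻¹
  have hr0 : r ≠ 0 := by simp [r, ENNReal.rpow_eq_zero_iff, hb0, hat, hαβ, hαβ.le]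
  have hrt : r ≠ ∞ :=
    ENNReal.rpow_ne_top_of_nonneg (inv_pos.2 hαβ).le (ENNReal.mul_ne_top hbt (by simpa using ha0))
  have hr : ∀ u, r ^ u = b ^ (u / (α + β)) * a ^ (-(u / (α + β))) := fun u => by
    rw [← ENNReal.rpow_mul, ENNReal.mul_rpow_of_ne_top hbt (by simpa using ha0), ENNReal.inv_rpow,
      ← ENNReal.rpow_neg, inv_mul_eq_div]
  have hA : a * r ^ α = a ^ t * b ^ s := by
    rw [hr, mul_left_comm, mul_rpow_neg a ha0 hat, hs, mul_comm]
  have hB : b * r ^ (-β) = a ^ t * b ^ s := by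
    rw [hr, neg_div, neg_neg, ← mul_assoc, mul_rpow_neg b hb0 hbt]
    exact (congrArg (b ^ · * a ^ t) ht).trans (mul_comm _ _)
  calc g ≤ a * r ^ α + b * r ^ (-β) := h r hr0 hrt
    _ = 2 * a ^ t * b ^ s := by rw [hA, hB, ← two_mul, mul_assoc]

theorem setLIntegral_le_lintegral_rpow_mul_measure_rpow {α : Type*} [MeasurableSpace α]
    (μ : Measure α) {q q' : ℝ} (hqq' : q.HolderConjugate q') {f : α → ℝ≥0∞}
    (hf : AEMeasurable f μ) (s : Set α) :
    ∫⁻ x in s, f x ∂μ ≤ (∫⁻ x, f x ^ q ∂μ) ^ (1 / q) * μ s ^ (1 / q') := by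
  calc ∫⁻ x in s, f x ∂μ = ∫⁻ x in s, (f * 1) x ∂μ := by simp
    _ ≤ (∫⁻ x in s, f x ^ q ∂μ) ^ (1 / q) * (∫⁻ _ in s, 1 ^ q' ∂μ) ^ (1 / q') :=
      ENNReal.lintegral_mul_le_Lp_mul_Lq _ hqq' hf.restrict aemeasurable_const
    _ ≤ (∫⁻ x, f x ^ q ∂μ) ^ (1 / q) * μ s ^ (1 / q') := by
      refine mul_le_mul' ?_ (by simp)
      exact ENNReal.rpow_le_rpow (setLIntegral_le_lintegral _ _) hqq'.one_div_nonneg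

theorem lintegral_rpow_rpow_le_of_le_mul_rpow_mul_rpow {X : Type*} [MeasurableSpace X]
    {ν : Measure X} {g A m : X → ℝ≥0∞} (hA : AEMeasurable A ν) (hm : AEMeasurable m ν)
    {K : ℝ≥0∞} {a b p : ℝ} (ha : 0 ≤ a) (hb : 0 ≤ b) (hp : 0 < p) (habp : (a + b) * p = 1)
    (h : ∀ x, g x ≤ K * A x ^ a * m x ^ b) :
    (∫⁻ x, g x ^ p ∂ν) ^ (1 / p) ≤ K * (∫⁻ x, A x ∂ν) ^ a * (∫⁻ x, m x ∂ν) ^ b := by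
  have hpow : ∀ x, g x ^ p ≤ K ^ p * (A x ^ (a * p) * m x ^ (b * p)) := fun x => by
    calc g x ^ p ≤ (K * A x ^ a * m x ^ b) ^ p := ENNReal.rpow_le_rpow (h x) hp.le
      _ = K ^ p * (A x ^ (a * p) * m x ^ (b * p)) := by
        rw [ENNReal.mul_rpow_of_nonneg _ _ hp.le, ENNReal.mul_rpow_of_nonneg _ _ hp.le,
          ENNReal.rpow_mul, ENNReal.rpow_mul, mul_assoc]
  calc (∫⁻ x, g x ^ p ∂ν) ^ (1 / p)
      ≤ (K ^ p * ∫⁻ x, A x ^ (a * p) * m x ^ (b * p) ∂ν) ^ (1 / p) := by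
        rw [← lintegral_const_mul'' _ (by fun_prop)]
        exact ENNReal.rpow_le_rpow (lintegral_mono hpow) (by positivity)
    _ ≤ (K ^ p * ((∫⁻ x, A x ∂ν) ^ (a * p) * (∫⁻ x, m x ∂ν) ^ (b * p))) ^ (1 / p) := by
        gcongr
        exact ENNReal.lintegral_mul_norm_pow_le hA hm (by positivity) (by positivity)
          (by rw [← add_mul, habp])
    _ = K * (∫⁻ x, A x ∂ν) ^ a * (∫⁻ x, m x ∂ν) ^ b := by
        simp only [ENNReal.mul_rpow_of_nonneg _ _ (one_div_nonneg.2 hp.le), ← ENNReal.rpow_mul,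
          mul_one_div_cancel hp.ne', mul_one, ENNReal.rpow_one, mul_assoc]

theorem eLpNorm_integral_le_lintegral_lintegral_rpow {X Y E : Type*} [MeasurableSpace X]
    [MeasurableSpace Y] [NormedAddCommGroup E] [NormedSpace ℝ E] (ν : Measure X) (μ : Measure Y)
    (f : X → Y → E) {p : ℝ} (hp : 0 < p) :
    eLpNorm (fun x => ∫ y, f x y ∂μ) (ENNReal.ofReal p) ν ≤
      (∫⁻ x, (∫⁻ y, ‖f x y‖ₑ ∂μ) ^ p ∂ν) ^ (1 / p) := by
  rw [eLpNorm_eq_lintegral_rpow_enorm_toReal (by simpa using hp) ENNReal.ofReal_ne_top,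
    ENNReal.toReal_ofReal hp.le]
  gcongr
  exact enorm_integral_le_lintegral_enorm _

theorem setLIntegral_compl_ball_le_moment {E : Type*} [SeminormedAddCommGroup E]
    [MeasurableSpace E] [OpensMeasurableSpace E] (μ : Measure E) (g : E → ℝ≥0∞) {R β : ℝ}
    (hR : 0 < R) (hβ : 0 ≤ β) :
    ∫⁻ v in (ball 0 R)ᶜ, g v ∂μ ≤ (∫⁻ v, ‖v‖ₑ ^ β * g v ∂μ) * ENNReal.ofReal R ^ (-β) := by
  set r := ENNReal.ofReal R
  have hr0 : r ≠ 0 := by simpa [r] using hR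
  have hrβ : r ^ (-β) ≠ ∞ := by simp [ENNReal.rpow_eq_top_iff, hr0, r]
  have hweight : ∀ v ∈ (ball (0 : E) R)ᶜ, g v ≤ ‖v‖ₑ ^ β * g v * r ^ (-β) := fun v hv => by
    have hRv : r ≤ ‖v‖ₑ := by
      rw [← ofReal_norm]
      exact ENNReal.ofReal_le_ofReal (by simpa using hv)
    have hone : 1 ≤ ‖v‖ₑ ^ β * r ^ (-β) := by
      calc (1 : ℝ≥0∞) = r ^ β * r ^ (-β) := by
            rw [← ENNReal.rpow_add _ _ hr0 ENNReal.ofReal_ne_top, add_neg_cancel, ENNReal.rpow_zero]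
        _ ≤ ‖v‖ₑ ^ β * r ^ (-β) := by gcongr
    calc g v = 1 * g v := (one_mul _).symm
      _ ≤ ‖v‖ₑ ^ β * r ^ (-β) * g v := by gcongr
      _ = ‖v‖ₑ ^ β * g v * r ^ (-β) := by ring
  calc ∫⁻ v in (ball 0 R)ᶜ, g v ∂μ ≤ ∫⁻ v in (ball 0 R)ᶜ, ‖v‖ₑ ^ β * g v * r ^ (-β) ∂μ :=
        setLIntegral_mono' measurableSet_ball.compl hweight
    _ ≤ ∫⁻ v, ‖v‖ₑ ^ β * g v * r ^ (-β) ∂μ := setLIntegral_le_lintegral _ _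
    _ = (∫⁻ v, ‖v‖ₑ ^ β * g v ∂μ) * r ^ (-β) := lintegral_mul_const' _ _ hrβ

theorem finrank_div_pos (V : Type*) [AddCommGroup V] [Module ℝ V] [FiniteDimensional ℝ V]
    [Nontrivial V] {q' : ℝ} (hq' : 0 < q') : 0 < (Module.finrank ℝ V : ℝ) / q' :=
  div_pos (by simpa using Module.finrank_pos) hq'

section Velocity

variable {V : Type*} [NormedAddCommGroup V] [NormedSpace ℝ V] [MeasurableSpace V] [BorelSpace V]
  [FiniteDimensional ℝ V] [Nontrivial V] (μ : Measure V) [μ.IsAddHaarMeasure]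

theorem measure_ball_rpow {R q : ℝ} (hR : 0 ≤ R) (hq : 0 ≤ q) :
    μ (ball 0 R) ^ q = μ (ball 0 1) ^ q * ENNReal.ofReal R ^ (Module.finrank ℝ V * q) := by
  rw [Measure.addHaar_ball _ _ hR, ENNReal.ofReal_pow hR, ENNReal.mul_rpow_of_nonneg _ _ hq,
    ← ENNReal.rpow_natCast, ← ENNReal.rpow_mul, mul_comm]

theorem lintegral_le_ball_add_moment {q q' : ℝ} (hqq' : q.HolderConjugate q')
    {g : V → ℝ≥0∞} (hg : AEMeasurable g μ) {R β : ℝ} (hR : 0 < R) (hβ : 0 ≤ β) :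
    ∫⁻ v, g v ∂μ ≤ (∫⁻ v, g v ^ q ∂μ) ^ (1 / q) * μ (ball 0 1) ^ (1 / q') *
        ENNReal.ofReal R ^ (Module.finrank ℝ V / q') +
      (∫⁻ v, ‖v‖ₑ ^ β * g v ∂μ) * ENNReal.ofReal R ^ (-β) := by
  rw [← lintegral_add_compl _ measurableSet_ball]
  refine add_le_add ?_ (setLIntegral_compl_ball_le_moment μ g hR hβ)
  calc ∫⁻ v in ball 0 R, g v ∂μ ≤ (∫⁻ v, g v ^ q ∂μ) ^ (1 / q) * μ (ball 0 R) ^ (1 / q') :=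
        setLIntegral_le_lintegral_rpow_mul_measure_rpow μ hqq' hg _
    _ = _ := by rw [measure_ball_rpow μ hR.le hqq'.symm.one_div_nonneg, mul_one_div, mul_assoc]

theorem lintegral_le_two_mul_Lp_rpow_mul_moment_rpow {q q' : ℝ}
    (hqq' : q.HolderConjugate q') {g : V → ℝ≥0∞} (hg : AEMeasurable g μ) {α β : ℝ}
    (hα : Module.finrank ℝ V / q' = α) (hβ : 0 < β) :
    ∫⁻ v, g v ∂μ ≤ 2 * ((∫⁻ v, g v ^ q ∂μ) ^ (1 / q) * μ (ball 0 1) ^ (1 / q')) ^ (β / (α + β)) *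
      (∫⁻ v, ‖v‖ₑ ^ β * g v ∂μ) ^ (α / (α + β)) := by
  have hα0 : 0 < α := hα ▸ finrank_div_pos V hqq'.symm.pos
  subst hα
  refine ENNReal.le_two_mul_rpow_mul_rpow_of_forall_le hα0 hβ ?_ ?_ fun r hr0 hrt => ?_
  · intro h
    have hball : μ (ball 0 1) ^ (1 / q') ≠ 0 :=
      (ENNReal.rpow_pos_of_nonneg (measure_ball_pos μ 0 one_pos) hqq'.symm.one_div_nonneg).ne'
    have hLq : ∫⁻ v, g v ^ q ∂μ = 0 := by
      simpa [ENNReal.rpow_eq_zero_iff, hqq'.pos, not_lt.2 hqq'.pos.le] using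
        (mul_eq_zero.1 h).resolve_right hball
    rw [lintegral_congr_ae (ENNReal.ae_eq_zero_of_lintegral_rpow_eq_zero hqq'.nonneg hg hLq)]
    simp
  · intro h
    rw [lintegral_eq_zero_iff' (by fun_prop)] at h
    rw [lintegral_eq_zero_iff' hg]
    filter_upwards [h, Measure.ae_ne μ 0] with v hv hv0
    simpa [ENNReal.rpow_eq_zero_iff, hv0, hβ, not_lt.2 hβ.le] using hv
  · simpa [ENNReal.ofReal_toReal hrt] using
      lintegral_le_ball_add_moment μ hqq' hg (ENNReal.toReal_pos hr0 hrt) hβ.le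

theorem lintegral_rpow_lintegral_le {X : Type*} [MeasurableSpace X] (ν : Measure X)
    {q q' : ℝ} (hqq' : q.HolderConjugate q') {F : X × V → ℝ≥0∞}
    (hF : Measurable F) {α β p : ℝ} (hα : Module.finrank ℝ V / q' = α) (hβ : 0 < β)
    (hp : (β / (α + β) / q + α / (α + β)) * p = 1) :
    (∫⁻ x, (∫⁻ v, F (x, v) ∂μ) ^ p ∂ν) ^ (1 / p) ≤
      2 * μ (ball 0 1) ^ (β / (α + β) / q') * (∫⁻ z, F z ^ q ∂ν.prod μ) ^ (β / (α + β) / q) *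
        (∫⁻ z, ‖z.2‖ₑ ^ β * F z ∂ν.prod μ) ^ (α / (α + β)) := by
  have hα0 : 0 < α := hα ▸ finrank_div_pos V hqq'.symm.pos
  have hθ : 0 ≤ β / (α + β) := by positivity
  have hθq : 0 ≤ β / (α + β) / q := div_nonneg hθ hqq'.pos.le
  have hmoment : Measurable fun z : X × V => ‖z.2‖ₑ ^ β * F z := by fun_prop
  rw [lintegral_prod _ (hF.pow_const q).aemeasurable, lintegral_prod _ hmoment.aemeasurable]
  refine lintegral_rpow_rpow_le_of_le_mul_rpow_mul_rpow
    (hF.pow_const q).lintegral_prod_right'.aemeasurable hmoment.lintegral_prod_right'.aemeasurable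
    hθq (by positivity)
    (pos_of_mul_pos_right (hp ▸ one_pos) (add_nonneg hθq (by positivity))) hp fun x => ?_
  refine (lintegral_le_two_mul_Lp_rpow_mul_moment_rpow μ hqq' (g := fun v => F (x, v))
    (hF.comp measurable_prodMk_left).aemeasurable hα hβ).trans_eq ?_
  rw [ENNReal.mul_rpow_of_nonneg _ _ hθ, ← ENNReal.rpow_mul, ← ENNReal.rpow_mul, one_div_mul_eq_div,
    one_div_mul_eq_div]
  ring

theorem toReal_eLpNorm_integral_le {X : Type*} [MeasurableSpace X] (ν : Measure X) {q q' : ℝ}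
    (hqq' : q.HolderConjugate q') {f : X × V → ℝ} (hf : Measurable f) (hf0 : ∀ z, 0 ≤ f z)
    (hfq : MemLp f (ENNReal.ofReal q) (ν.prod μ)) {α β p : ℝ}
    (hmoment : Integrable (fun z => ‖z.2‖ ^ β * f z) (ν.prod μ))
    (hα : Module.finrank ℝ V / q' = α) (hβ : 0 < β)
    (hp : (β / (α + β) / q + α / (α + β)) * p = 1) :
    (eLpNorm (fun x => ∫ v, f (x, v) ∂μ) (ENNReal.ofReal p) ν).toReal ≤
      2 * (μ (ball 0 1)).toReal ^ (β / (α + β) / q') *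
        (eLpNorm f (ENNReal.ofReal q) (ν.prod μ)).toReal ^ (β / (α + β)) *
        (∫ z, ‖z.2‖ ^ β * f z ∂ν.prod μ) ^ (α / (α + β)) := by
  have hα0 : 0 < α := hα ▸ finrank_div_pos V hqq'.symm.pos
  have hp0 : 0 < p := pos_of_mul_pos_right (hp ▸ one_pos) (add_nonneg
    (div_nonneg (by positivity) hqq'.pos.le) (by positivity))
  set M := ∫ z, ‖z.2‖ ^ β * f z ∂ν.prod μ
  have hM0 : 0 ≤ M := integral_nonneg fun z => by positivity [hf0 z]
  have hLq : (∫⁻ z, ‖f z‖ₑ ^ q ∂ν.prod μ) ^ (β / (α + β) / q) =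
      eLpNorm f (ENNReal.ofReal q) (ν.prod μ) ^ (β / (α + β)) := by
    rw [eLpNorm_eq_lintegral_rpow_enorm_toReal (by simpa using hqq'.pos) ENNReal.ofReal_ne_top,
      ENNReal.toReal_ofReal hqq'.pos.le, ← ENNReal.rpow_mul, one_div_mul_eq_div]
  have hM : ∫⁻ z, ‖z.2‖ₑ ^ β * ‖f z‖ₑ ∂ν.prod μ = ENNReal.ofReal M := by
    rw [ofReal_integral_eq_lintegral_ofReal hmoment (ae_of_all _ fun z => by positivity [hf0 z])]
    refine lintegral_congr fun z => ?_
    rw [ENNReal.ofReal_mul (by positivity), ← ENNReal.ofReal_rpow_of_nonneg (norm_nonneg _) hβ.le,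
      ofReal_norm, Real.enorm_eq_ofReal (hf0 z)]
  have bound : eLpNorm (fun x => ∫ v, f (x, v) ∂μ) (ENNReal.ofReal p) ν ≤
      2 * μ (ball 0 1) ^ (β / (α + β) / q') *
        eLpNorm f (ENNReal.ofReal q) (ν.prod μ) ^ (β / (α + β)) *
        ENNReal.ofReal M ^ (α / (α + β)) := by
    refine (eLpNorm_integral_le_lintegral_lintegral_rpow _ _ (fun x v => f (x, v)) hp0).trans ?_
    simpa only [hLq, hM] using lintegral_rpow_lintegral_le μ ν hqq' hf.enorm hα hβ hp
  have hfinite : 2 * μ (ball 0 1) ^ (β / (α + β) / q') *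
      eLpNorm f (ENNReal.ofReal q) (ν.prod μ) ^ (β / (α + β)) *
        ENNReal.ofReal M ^ (α / (α + β)) ≠ ∞ := by
    have := hqq'.symm.pos
    refine ENNReal.mul_ne_top
      (ENNReal.mul_ne_top (ENNReal.mul_ne_top ENNReal.ofNat_ne_top ?_) ?_) ?_
      <;> refine ENNReal.rpow_ne_top_of_nonneg (by positivity) ?_
    exacts [measure_ball_lt_top.ne, hfq.eLpNorm_ne_top, ENNReal.ofReal_ne_top]
  refine (ENNReal.toReal_mono hfinite bound).trans_eq ?_
  simp [← ENNReal.toReal_rpow, ENNReal.toReal_ofReal hM0]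

end Velocity

/-- Velocity-moment interpolation: for `f ≥ 0` in `L^q(𝕋^d × ℝ^d)` with finite
second velocity moment, the spatial density `ρ(x) = ∫ f(x,v) dv` satisfies
`‖ρ‖_{L^p} ≤ C ‖f‖_{L^q}^{(2/d)/(1/q'+2/d)} (∬ |v|² f)^{(1/q')/(1/q'+2/d)}`,
with `p = (d(q-1)+2q)/(d(q-1)+2)` and `C = C(d,q)`. -/
theorem density_interpolation_estimate (d : ℕ) (hd : 1 ≤ d) (q : ℝ) (hq : 1 < q) :
    ∃ C : ℝ, 0 < C ∧
      ∀ f : ((Fin d → AddCircle (1:ℝ)) × EuclideanSpace ℝ (Fin d)) → ℝ,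
        Measurable f →
        (∀ z, 0 ≤ f z) →
        MemLp f (ENNReal.ofReal q) volume →
        Integrable (fun z => ‖z.2‖ ^ 2 * f z) volume →
        (eLpNorm (fun x => ∫ v : EuclideanSpace ℝ (Fin d), f (x, v))
            (ENNReal.ofReal ((d * (q - 1) + 2 * q) / (d * (q - 1) + 2))) volume).toReal ≤
          C * (eLpNorm f (ENNReal.ofReal q) volume).toReal ^
              ((2 / d) / ((q - 1) / q + 2 / d)) *
            (∫ z : ((Fin d → AddCircle (1:ℝ)) × EuclideanSpace ℝ (Fin d)),
                ‖z.2‖ ^ 2 * f z) ^ (((q - 1) / q) / ((q - 1) / q + 2 / d)) := by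
  have : Nontrivial (EuclideanSpace ℝ (Fin d)) :=
    Module.nontrivial_of_finrank_pos (R := ℝ) (by rw [finrank_euclideanSpace_fin]; omega)
  have hqq' := Real.HolderConjugate.conjExponent hq
  have hq1 : 0 < q - 1 := by linarith
  have hD : 0 < (d : ℝ) * (q - 1) := mul_pos (by exact_mod_cast hd) hq1
  set α : ℝ := d * (q - 1) / q
  have hα : Module.finrank ℝ (EuclideanSpace ℝ (Fin d)) / q.conjExponent = α := by
    simp only [finrank_euclideanSpace_fin, Real.conjExponent, α]; field_simp
  have hθ : 2 / (α + 2) = (2 / d) / ((q - 1) / q + 2 / d) := by simp only [α]; field_simp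
  have h1θ : α / (α + 2) = ((q - 1) / q) / ((q - 1) / q + 2 / d) := by simp only [α]; field_simp
  have hp : (2 / (α + 2) / q + α / (α + 2)) * ((d * (q - 1) + 2 * q) / (d * (q - 1) + 2)) = 1 := by
    simp only [α]; field_simp; ring
  have hc : 0 < (volume (ball (0 : EuclideanSpace ℝ (Fin d)) 1)).toReal :=
    ENNReal.toReal_pos (measure_ball_pos _ _ one_pos).ne' measure_ball_lt_top.ne
  refine ⟨2 * (volume (ball (0 : EuclideanSpace ℝ (Fin d)) 1)).toReal ^
      (2 / (α + 2) / q.conjExponent), by positivity, fun f hf hf0 hfq hmoment => ?_⟩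
  rw [← hθ, ← h1θ]
  simpa only [Real.rpow_two, ← Measure.volume_eq_prod] using
    toReal_eLpNorm_integral_le volume volume hqq' hf hf0 hfq
    (by simpa only [Real.rpow_two, ← Measure.volume_eq_prod] using hmoment) hα two_pos hp
end
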